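/- arXiv:1002.0787 — 2 statements merged into one kernel-verified Lean document; each statement's English description precedes it below -/
import Mathlib

section
/- Let N ≥ 1 be an integer, ρ ∈ [0,1], and f, g real numbers. Let P = I − Q_ρ, let A = [[0,1],[0,0]] and K = [[0,0],[f,g]], and set M = I ⊗ A + P ⊗ K. Then every eigenvalue of M has strictly negative real part if and only if f < 0 and g < 0. -/
open Kronecker

/-- The `N × N` complex tridiagonal matrix with superdiagonal entries `ρ` and
subdiagonal entries `1 - ρ`. -/
def Qmat (N : ℕ) (ρ : ℝ) : Matrix (Fin N) (Fin N) ℂ :=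
  Matrix.of fun i j =>
    if (j : ℕ) = (i : ℕ) + 1 then (ρ : ℂ)
    else if (i : ℕ) = (j : ℕ) + 1 then ((1 - ρ : ℝ) : ℂ) else 0

/-- The reduced graph Laplacian `P = I - Q_ρ`. -/
def Pmat (N : ℕ) (ρ : ℝ) : Matrix (Fin N) (Fin N) ℂ :=
  1 - Qmat N ρ

/-!
Writing an eigenvector of `M = I ⊗ A + P ⊗ K` as `(u, ν u)` shows that `ν` is an eigenvalue of `M`
exactly when `ν² = (f + g ν) μ` for some eigenvalue `μ` of `P`. The eigenvalues of `P = I - Q_ρ`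
are real and positive: for `ρ ∈ {0, 1}` the matrix `Q_ρ` is strictly triangular; otherwise `Q_ρ`
satisfies detailed balance with the weights `(ρ / (1 - ρ)) ^ i`, hence is self-adjoint for the
weighted inner product, and a maximum-modulus argument along the path gives `‖λ‖ < 1`. Finally,
for real `μ > 0` both roots of `ν² - g μ ν - f μ` lie in the open left half-plane iff `f < 0` and
`g < 0` (Routh–Hurwitz in degree two).
-/

open Matrix ComplexOrder

section Spectrum

variable {K n : Type*} [Field K] [Fintype n] [DecidableEq n]

theorem Matrix.mem_spectrum_iff_exists_mulVec_eq_smul {A : Matrix n n K} {μ : K} :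
    μ ∈ spectrum K A ↔ ∃ v ≠ 0, A *ᵥ v = μ • v := by
  rw [← spectrum_toLin', ← Module.End.hasEigenvalue_iff_mem_spectrum]
  constructor
  · intro h
    obtain ⟨v, hv⟩ := h.exists_hasEigenvector
    exact ⟨v, hv.2, by simpa using hv.apply_eq_smul⟩
  · rintro ⟨v, hv, hAv⟩
    exact Module.End.hasEigenvalue_of_hasEigenvector
      ⟨Module.End.mem_eigenspace_iff.mpr (by simpa using hAv), hv⟩

theorem Matrix.spectrum_transpose (A : Matrix n n K) : spectrum K Aᵀ = spectrum K A := by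
  ext μ
  simp [mem_spectrum_iff_isRoot_charpoly, charpoly_transpose]

theorem Matrix.spectrum_eq_range_diag_of_isUpperTriangular [LinearOrder n] {A : Matrix n n K}
    (hA : A.IsUpperTriangular) : spectrum K A = Set.range A.diag := by
  ext μ
  simp only [mem_spectrum_iff_isRoot_charpoly, charpoly_of_isUpperTriangular A hA,
    Polynomial.IsRoot.def, Polynomial.eval_prod, Polynomial.eval_sub, Polynomial.eval_X,
    Polynomial.eval_C, Finset.prod_eq_zero_iff, Finset.mem_univ, true_and, sub_eq_zero,
    Set.mem_range, diag_apply]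
  exact exists_congr fun _ ↦ eq_comm

theorem Matrix.spectrum_eq_range_diag_of_isLowerTriangular [LinearOrder n] {A : Matrix n n K}
    (hA : A.IsLowerTriangular) : spectrum K A = Set.range A.diag := by
  have hAt : Aᵀ.IsUpperTriangular := fun _ _ hij ↦ hA hij
  rw [← spectrum_transpose, spectrum_eq_range_diag_of_isUpperTriangular hAt]
  rfl

theorem Matrix.im_eq_zero_of_mem_spectrum_of_isHermitian_mul {A B : Matrix n n ℂ}
    (hB : B.PosDef) (hBA : (B * A).IsHermitian) {μ : ℂ} (hμ : μ ∈ spectrum ℂ A) :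
    μ.im = 0 := by
  obtain ⟨v, hv, hAv⟩ := mem_spectrum_iff_exists_mulVec_eq_smul.mp hμ
  have hpos := Complex.pos_iff.mp (hB.dotProduct_mulVec_pos hv)
  have hreal := hBA.im_star_dotProduct_mulVec_self v
  rw [← mulVec_mulVec, hAv, mulVec_smul, dotProduct_smul, smul_eq_mul] at hreal
  simp only [RCLike.im_to_complex, Complex.mul_im, ← hpos.2, mul_zero, zero_add] at hreal
  exact (mul_eq_zero.mp hreal).resolve_right hpos.1.ne'

theorem Matrix.kronecker_companion_mulVec_apply_zero (P : Matrix n n K) (f g : K)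
    (w : n × Fin 2 → K) (i : n) :
    (((1 : Matrix n n K) ⊗ₖ !![0, 1; 0, 0] + P ⊗ₖ !![0, 0; f, g]) *ᵥ w) (i, 0) = w (i, 1) := by
  simp [mulVec, dotProduct, Fintype.sum_prod_type, one_apply]

theorem Matrix.kronecker_companion_mulVec_apply_one (P : Matrix n n K) (f g : K)
    (w : n × Fin 2 → K) (i : n) :
    (((1 : Matrix n n K) ⊗ₖ !![0, 1; 0, 0] + P ⊗ₖ !![0, 0; f, g]) *ᵥ w) (i, 1) =
      f * (P *ᵥ fun j ↦ w (j, 0)) i + g * (P *ᵥ fun j ↦ w (j, 1)) i := by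
  simp [mulVec, dotProduct, Fintype.sum_prod_type, Finset.mul_sum, ← Finset.sum_add_distrib,
    mul_assoc, mul_left_comm]

theorem Matrix.mem_spectrum_kronecker_companion_iff [IsAlgClosed K] [Nonempty n]
    (P : Matrix n n K) (f g ν : K) :
    ν ∈ spectrum K ((1 : Matrix n n K) ⊗ₖ !![0, 1; 0, 0] + P ⊗ₖ !![0, 0; f, g]) ↔
      ∃ μ ∈ spectrum K P, ν ^ 2 = (f + g * ν) * μ := by
  simp only [mem_spectrum_iff_exists_mulVec_eq_smul]
  constructor
  · rintro ⟨w, hw, hMw⟩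
    set u : n → K := fun i ↦ w (i, 0)
    have hw1 : (fun i ↦ w (i, 1)) = ν • u := funext fun i ↦ by
      simpa [kronecker_companion_mulVec_apply_zero] using congrFun hMw (i, 0)
    have hPu : (f + g * ν) • P *ᵥ u = ν ^ 2 • u := funext fun i ↦ by
      have := congrFun hMw (i, 1)
      rw [kronecker_companion_mulVec_apply_one, hw1, mulVec_smul] at this
      have hwi : w (i, 1) = ν * u i := congrFun hw1 i
      simp only [Pi.smul_apply, smul_eq_mul, hwi] at this ⊢
      linear_combination this
    have hu : u ≠ 0 := by
      rintro hu
      refine hw (funext fun ⟨i, b⟩ ↦ ?_)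
      fin_cases b
      · exact congrFun hu i
      · simpa [hu] using congrFun hw1 i
    by_cases hc : f + g * ν = 0
    · have hν : ν = 0 := by
        rw [hc, zero_smul, eq_comm, smul_eq_zero] at hPu
        exact pow_eq_zero_iff two_ne_zero |>.mp (hPu.resolve_right hu)
      obtain ⟨μ, hμ⟩ := spectrum.nonempty_of_isAlgClosed_of_finiteDimensional K P
      exact ⟨μ, mem_spectrum_iff_exists_mulVec_eq_smul.mp hμ,
        by rw [hc, zero_mul, hν, zero_pow two_ne_zero]⟩
    · refine ⟨ν ^ 2 / (f + g * ν), ⟨u, hu, ?_⟩, (mul_div_cancel₀ _ hc).symm⟩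
      rw [div_eq_inv_mul, mul_smul, ← hPu, smul_smul, inv_mul_cancel₀ hc, one_smul]
  · rintro ⟨μ, ⟨u, hu, hPu⟩, hν⟩
    refine ⟨fun p ↦ ![u p.1, ν * u p.1] p.2, fun h ↦ hu (funext fun i ↦ ?_),
      funext fun ⟨i, b⟩ ↦ ?_⟩
    · simpa using congrFun h (i, 0)
    fin_cases b
    · simp [kronecker_companion_mulVec_apply_zero]
    · have hPνu : (P *ᵥ fun j ↦ ν * u j) = (ν * μ) • u := by
        rw [show (fun j ↦ ν * u j) = ν • u from rfl, mulVec_smul, hPu, smul_smul]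
      simp only [Fin.mk_one, Fin.isValue]
      rw [kronecker_companion_mulVec_apply_one]
      simp only [cons_val_zero, cons_val_one, cons_val_fin_one, hPu, hPνu, Pi.smul_apply,
        smul_eq_mul]
      linear_combination u i * hν.symm

end Spectrum

theorem Complex.forall_re_neg_of_sq_add_mul_add_eq_zero_iff (a b : ℝ) :
    (∀ z : ℂ, z ^ 2 + a * z + b = 0 → z.re < 0) ↔ 0 < a ∧ 0 < b := by
  constructor
  · intro hroots
    rcases le_or_gt 0 (a ^ 2 - 4 * b) with hd | hd
    · set s := √(a ^ 2 - 4 * b)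
      have hs : s ^ 2 = a ^ 2 - 4 * b := Real.sq_sqrt hd
      have hsC : (s : ℂ) ^ 2 = a ^ 2 - 4 * b := by exact_mod_cast hs
      have hplus := hroots (((-a + s) / 2 : ℝ) : ℂ) (by push_cast; linear_combination hsC / 4)
      have hminus := hroots (((-a - s) / 2 : ℝ) : ℂ) (by push_cast; linear_combination hsC / 4)
      simp only [Complex.ofReal_re] at hplus hminus
      have : 0 ≤ s := Real.sqrt_nonneg _
      constructor <;> nlinarith
    · set t := √(4 * b - a ^ 2)
      have ht : (t : ℂ) ^ 2 = 4 * b - a ^ 2 := by exact_mod_cast Real.sq_sqrt (by linarith)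
      have hroot := hroots (-a / 2 + t / 2 * Complex.I)
        (by linear_combination (t ^ 2 / 4 : ℂ) * Complex.I_sq - ht / 4)
      simp only [add_re, div_ofNat_re, neg_re, ofReal_re, mul_re, I_re, mul_zero, div_ofNat_im,
        ofReal_im, zero_div, I_im, mul_one, sub_self, add_zero] at hroot
      constructor <;> nlinarith
  · rintro ⟨ha, hb⟩ z hz
    have hre := congrArg Complex.re hz
    have him := congrArg Complex.im hz
    simp only [sq, add_re, add_im, mul_re, mul_im, ofReal_re, ofReal_im, zero_re,
      zero_im] at hre him
    rcases eq_or_ne z.im 0 with hy | hy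
    · rw [hy] at hre
      nlinarith
    · have : 2 * z.re + a = 0 := mul_right_cancel₀ hy (by linarith)
      linarith

theorem Complex.forall_re_neg_of_sq_eq_add_mul_mul_iff {f g l : ℝ} (hl : 0 < l) :
    (∀ ν : ℂ, ν ^ 2 = (f + g * ν) * l → ν.re < 0) ↔ f < 0 ∧ g < 0 := by
  have hroots (ν : ℂ) : ν ^ 2 = (f + g * ν) * l ↔ ν ^ 2 + (-g * l : ℝ) * ν + (-f * l : ℝ) = 0 := by
    push_cast
    constructor <;> intro h <;> linear_combination h
  simp only [hroots, forall_re_neg_of_sq_add_mul_add_eq_zero_iff, neg_mul, neg_pos]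
  constructor
  · rintro ⟨hg, hf⟩
    exact ⟨neg_of_mul_neg_left hf hl.le, neg_of_mul_neg_left hg hl.le⟩
  · rintro ⟨hf, hg⟩
    exact ⟨mul_neg_of_neg_of_pos hg hl, mul_neg_of_neg_of_pos hf hl⟩

theorem Fin.sum_ite_val_eq {M : Type*} [AddCommMonoid M] {N : ℕ} (v : Fin N → M) (k : ℕ) :
    ∑ j : Fin N, (if (j : ℕ) = k then v j else 0) = if h : k < N then v ⟨k, h⟩ else 0 := by
  split_ifs with h
  · rw [Finset.sum_eq_single ⟨k, h⟩ (fun j _ hj ↦ if_neg fun hjk ↦ hj (Fin.ext hjk)) (by simp)]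
    simp
  · exact Finset.sum_eq_zero fun j _ ↦ if_neg (by omega)

section Qmat

variable {N : ℕ} {ρ : ℝ}

theorem Qmat_mulVec_apply (u : Fin N → ℂ) (i : Fin N) :
    (Qmat N ρ *ᵥ u) i =
      ρ * (if h : (i : ℕ) + 1 < N then u ⟨i + 1, h⟩ else 0) +
        ((1 - ρ : ℝ) : ℂ) * (if h : 0 < (i : ℕ) then u ⟨i - 1, by omega⟩ else 0) := by
  have hsplit (j : Fin N) : Qmat N ρ i j * u j =
      ρ * (if (j : ℕ) = i + 1 then u j else 0) +
        ((1 - ρ : ℝ) : ℂ) * (if (j : ℕ) = i - 1 ∧ 0 < (i : ℕ) then u j else 0) := by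
    simp only [Qmat, of_apply]
    split_ifs <;> first | omega | push_cast; ring
  rw [mulVec, dotProduct, Finset.sum_congr rfl fun j _ ↦ hsplit j, Finset.sum_add_distrib,
    ← Finset.mul_sum, ← Finset.mul_sum, Fin.sum_ite_val_eq]
  by_cases hi : 0 < (i : ℕ)
  · have hi' : (i : ℕ) - 1 < N := by omega
    rw [dif_pos hi]
    simp only [hi, and_true, Fin.sum_ite_val_eq, dif_pos hi']
  · simp [hi]

theorem Qmat_diag : (Qmat N ρ).diag = 0 := by
  ext i
  simp [Qmat]

theorem Qmat_zero_isLowerTriangular : (Qmat N 0).IsLowerTriangular := by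
  intro i j hij
  have : (i : ℕ) < j := OrderDual.toDual_lt_toDual.mp hij
  simp only [Qmat, of_apply, if_neg (show ¬(i : ℕ) = j + 1 by omega), Complex.ofReal_zero,
    ite_self]

theorem Qmat_one_isUpperTriangular : (Qmat N 1).IsUpperTriangular := by
  intro i j hji
  have : (j : ℕ) < i := hji
  simp only [Qmat, of_apply, if_neg (show ¬(j : ℕ) = i + 1 by omega), sub_self,
    Complex.ofReal_zero, ite_self]

theorem eq_zero_of_mem_spectrum_Qmat (hρ : ρ = 0 ∨ ρ = 1) {κ : ℂ}
    (hκ : κ ∈ spectrum ℂ (Qmat N ρ)) : κ = 0 := by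
  rcases hρ with rfl | rfl
  · rw [spectrum_eq_range_diag_of_isLowerTriangular Qmat_zero_isLowerTriangular] at hκ
    obtain ⟨i, rfl⟩ := hκ
    exact congrFun Qmat_diag i
  · rw [spectrum_eq_range_diag_of_isUpperTriangular Qmat_one_isUpperTriangular] at hκ
    obtain ⟨i, rfl⟩ := hκ
    exact congrFun Qmat_diag i

theorem isHermitian_diagonal_mul_Qmat (hρ1 : ρ < 1) :
    (diagonal (fun i : Fin N ↦ (((ρ / (1 - ρ)) ^ (i : ℕ) : ℝ) : ℂ)) * Qmat N ρ).IsHermitian := by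
  have hbalance (k : ℕ) : (ρ / (1 - ρ)) ^ k * ρ = (ρ / (1 - ρ)) ^ (k + 1) * (1 - ρ) := by
    rw [pow_succ, mul_assoc, div_mul_cancel₀ _ (by linarith)]
  ext i j
  simp only [conjTranspose_apply, diagonal_mul, Qmat, of_apply]
  split_ifs with hij hji hji
  · omega
  · rw [hij, ← Complex.ofReal_mul, Complex.star_def, Complex.conj_ofReal]
    exact_mod_cast hbalance j
  · rw [hji, ← Complex.ofReal_mul, Complex.star_def, Complex.conj_ofReal]
    exact_mod_cast (hbalance i).symm
  · simp

theorem norm_lt_one_of_mem_spectrum_Qmat (hρ0 : 0 ≤ ρ) (hρ1 : ρ < 1) {κ : ℂ}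
    (hκ : κ ∈ spectrum ℂ (Qmat N ρ)) : ‖κ‖ < 1 := by
  obtain ⟨u, hu, hQu⟩ := mem_spectrum_iff_exists_mulVec_eq_smul.mp hκ
  by_contra! hκ1
  obtain ⟨i₀, hi₀⟩ := Function.ne_iff.mp hu
  obtain ⟨imax, -, hmax⟩ := Finset.univ.exists_max_image (‖u ·‖) ⟨i₀, Finset.mem_univ _⟩
  set m := ‖u imax‖
  have hm : 0 < m := (norm_pos_iff.mpr hi₀).trans_le (hmax i₀ (Finset.mem_univ _))
  -- At the first index where `‖u‖` is maximal, `‖κ‖ ≥ 1` forces the predecessor to be maximal too.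
  set S := Finset.univ.filter fun j ↦ ‖u j‖ = m
  have hS : S.Nonempty := ⟨imax, Finset.mem_filter.mpr ⟨Finset.mem_univ _, rfl⟩⟩
  set i := S.min' hS
  have hi : ‖u i‖ = m := (Finset.mem_filter.mp (S.min'_mem hS)).2
  set prev : ℂ := if h : 0 < (i : ℕ) then u ⟨i - 1, by omega⟩ else 0
  have hnext : ‖(if h : (i : ℕ) + 1 < N then u ⟨i + 1, h⟩ else 0)‖ ≤ m := by
    split_ifs
    · exact hmax _ (Finset.mem_univ _)
    · simpa using hm.le
  have hprev : m ≤ ‖prev‖ := by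
    have key : ‖κ‖ * m ≤ ρ * m + (1 - ρ) * ‖prev‖ :=
      calc ‖κ‖ * m = ‖(Qmat N ρ *ᵥ u) i‖ := by rw [hQu, Pi.smul_apply, norm_smul, hi]
        _ ≤ ρ * m + (1 - ρ) * ‖prev‖ := by
          rw [Qmat_mulVec_apply]
          refine (norm_add_le _ _).trans (add_le_add ?_ ?_) <;> rw [norm_mul, Complex.norm_real]
          · rw [Real.norm_of_nonneg hρ0]
            exact mul_le_mul_of_nonneg_left hnext hρ0
          · rw [Real.norm_of_nonneg (by linarith)]
    nlinarith
  by_cases h0 : 0 < (i : ℕ)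
  · have hmem : (⟨i - 1, by omega⟩ : Fin N) ∈ S := by
      simp only [S, Finset.mem_filter, Finset.mem_univ, true_and]
      exact le_antisymm (hmax _ (Finset.mem_univ _)) (by simpa [prev, h0] using hprev)
    have : (i : ℕ) ≤ i - 1 := S.min'_le _ hmem
    omega
  · simp only [prev, dif_neg h0, norm_zero] at hprev
    linarith

theorem im_eq_zero_and_norm_lt_one_of_mem_spectrum_Qmat (hρ : ρ ∈ Set.Icc (0 : ℝ) 1) {κ : ℂ}
    (hκ : κ ∈ spectrum ℂ (Qmat N ρ)) : κ.im = 0 ∧ ‖κ‖ < 1 := by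
  obtain ⟨hρ0, hρ1⟩ := hρ
  by_cases hdeg : ρ = 0 ∨ ρ = 1
  · simp [eq_zero_of_mem_spectrum_Qmat hdeg hκ]
  rw [not_or] at hdeg
  have hρ0' : 0 < ρ := hρ0.lt_of_ne' hdeg.1
  have hρ1' : ρ < 1 := hρ1.lt_of_ne hdeg.2
  have hpos : (diagonal fun i : Fin N ↦ (((ρ / (1 - ρ)) ^ (i : ℕ) : ℝ) : ℂ)).PosDef :=
    .diagonal fun i ↦ Complex.zero_lt_real.mpr <| pow_pos (div_pos hρ0' (by linarith)) _
  exact ⟨im_eq_zero_of_mem_spectrum_of_isHermitian_mul hpos (isHermitian_diagonal_mul_Qmat hρ1') hκ,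
    norm_lt_one_of_mem_spectrum_Qmat hρ0 hρ1' hκ⟩

theorem exists_pos_eq_ofReal_of_mem_spectrum_Pmat (hρ : ρ ∈ Set.Icc (0 : ℝ) 1) {μ : ℂ}
    (hμ : μ ∈ spectrum ℂ (Pmat N ρ)) : ∃ l : ℝ, 0 < l ∧ μ = l := by
  rw [Pmat, ← map_one (algebraMap ℂ _), ← spectrum.singleton_sub_eq] at hμ
  obtain ⟨_, rfl, κ, hκ, rfl⟩ := hμ
  obtain ⟨him, hnorm⟩ := im_eq_zero_and_norm_lt_one_of_mem_spectrum_Qmat hρ hκ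
  exact ⟨1 - κ.re, by linarith [Complex.re_le_norm κ], Complex.ext (by simp) (by simp [him])⟩

end Qmat

theorem stmt_5 (N : ℕ) (hN : 1 ≤ N) (ρ : ℝ) (hρ : ρ ∈ Set.Icc (0 : ℝ) 1) (f g : ℝ) :
    (∀ ν ∈ spectrum ℂ
        ((1 : Matrix (Fin N) (Fin N) ℂ) ⊗ₖ (!![0, 1; 0, 0] : Matrix (Fin 2) (Fin 2) ℂ) +
          Pmat N ρ ⊗ₖ (!![0, 0; (f : ℂ), (g : ℂ)] : Matrix (Fin 2) (Fin 2) ℂ)),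
      ν.re < 0) ↔ (f < 0 ∧ g < 0) := by
  have : Nonempty (Fin N) := ⟨⟨0, hN⟩⟩
  constructor
  · intro hstable
    obtain ⟨μ, hμ⟩ := spectrum.nonempty_of_isAlgClosed_of_finiteDimensional ℂ (Pmat N ρ)
    obtain ⟨l, hl, rfl⟩ := exists_pos_eq_ofReal_of_mem_spectrum_Pmat hρ hμ
    exact (Complex.forall_re_neg_of_sq_eq_add_mul_mul_iff hl).mp fun ν hν ↦
      hstable ν ((mem_spectrum_kronecker_companion_iff _ _ _ _).mpr ⟨l, hμ, hν⟩)
  · rintro hfg ν hν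
    obtain ⟨μ, hμ, hνμ⟩ := (mem_spectrum_kronecker_companion_iff _ _ _ _).mp hν
    obtain ⟨l, hl, rfl⟩ := exists_pos_eq_ofReal_of_mem_spectrum_Pmat hρ hμ
    exact (Complex.forall_re_neg_of_sq_eq_add_mul_mul_iff hl).mpr hfg ν hνμ
end

section
/- Let ρ ∈ (0,1) (so ρ(1−ρ) > 0), let f, g be negative real numbers, and let ω > 0. Then the two roots μ₊, μ₋ of the quadratic ρx² − γ(ω)x + (1−ρ) = 0 have distinct absolute values: |μ₊| ≠ |μ₋|. -/
/-- `γ(ω) = (f + iωg + ω²)/(f + iωg)`. -/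
noncomputable def gam (f g ω : ℝ) : ℂ :=
  ((f : ℂ) + Complex.I * ω * g + (ω : ℂ) ^ 2) / ((f : ℂ) + Complex.I * ω * g)

/-!
If the two roots had equal moduli, then, their product `(1 - ρ)/ρ` being a positive real,
they would be complex conjugates of each other, so their sum `γ(ω)/ρ` would be real.
But `Im γ(ω) = -ω³g/(f² + ω²g²)` vanishes only when `ω = 0` or `g = 0`.
-/

theorem mul_add_eq_and_mul_mul_eq_of_forall_eq {R : Type*} [CommRing R] {a b c μ ν : R}
    (h : ∀ x, a * x ^ 2 - b * x + c = a * (x - μ) * (x - ν)) :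
    a * (μ + ν) = b ∧ a * (μ * ν) = c := by
  have h0 := h 0
  have h1 := h 1
  constructor
  · linear_combination h1 - h0
  · linear_combination -h0

theorem Complex.eq_conj_of_mul_eq_ofReal_of_norm_eq {μ ν : ℂ} {r : ℝ} (hr : 0 < r)
    (hmul : μ * ν = r) (hnorm : ‖μ‖ = ‖ν‖) : ν = (starRingEnd ℂ) μ := by
  have hμ : μ ≠ 0 := by
    rintro rfl
    exact hr.ne' (by exact_mod_cast hmul.symm.trans (zero_mul ν))
  have hnormSq : Complex.normSq μ = r := by
    have := congrArg norm hmul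
    rw [norm_mul, ← hnorm, Complex.norm_real, Real.norm_of_nonneg hr.le] at this
    rw [Complex.normSq_eq_norm_sq, sq, this]
  apply mul_left_cancel₀ hμ
  rw [hmul, Complex.mul_conj, hnormSq]

theorem gam_im (f g ω : ℝ) : (gam f g ω).im = -(ω ^ 3 * g) / (f ^ 2 + ω ^ 2 * g ^ 2) := by
  simp only [gam, sq, Complex.div_im, Complex.add_im, Complex.ofReal_im, Complex.mul_im,
    Complex.mul_re, Complex.I_re, Complex.ofReal_re, zero_mul, Complex.I_im, mul_zero, sub_self,
    one_mul, zero_add, add_zero, Complex.add_re, Complex.normSq_apply, sub_zero]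
  ring

theorem gam_im_ne_zero {f g ω : ℝ} (hg : g ≠ 0) (hω : ω ≠ 0) : (gam f g ω).im ≠ 0 := by
  rw [gam_im]
  have hden : 0 < f ^ 2 + ω ^ 2 * g ^ 2 := by positivity
  exact div_ne_zero (neg_ne_zero.mpr (by positivity)) hden.ne'

theorem stmt_15_general (ρ : ℝ) (hρ : ρ ∈ Set.Ioo (0 : ℝ) 1) (f g : ℝ)
    (hg : g < 0) (ω : ℝ) (hω : 0 < ω) (μp μm : ℂ)
    (hroots : ∀ x : ℂ, (ρ : ℂ) * x ^ 2 - gam f g ω * x + (1 - (ρ : ℂ))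
      = (ρ : ℂ) * (x - μp) * (x - μm)) :
    ‖μp‖ ≠ ‖μm‖ := by
  obtain ⟨hρ0, hρ1⟩ := hρ
  intro hnorm
  obtain ⟨hsum, hprod⟩ := mul_add_eq_and_mul_mul_eq_of_forall_eq hroots
  have hmul : μp * μm = ((1 - ρ) / ρ : ℝ) := by
    have hρc : (ρ : ℂ) ≠ 0 := by exact_mod_cast hρ0.ne'
    push_cast
    rw [eq_div_iff hρc, mul_comm, hprod]
  have hconj := Complex.eq_conj_of_mul_eq_ofReal_of_norm_eq
    (div_pos (sub_pos.mpr hρ1) hρ0) hmul hnorm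
  apply gam_im_ne_zero (f := f) hg.ne hω.ne'
  rw [← hsum, hconj, Complex.add_conj]
  simp

theorem stmt_15 (ρ : ℝ) (hρ : ρ ∈ Set.Ioo (0 : ℝ) 1) (f g : ℝ)
    (hf : f < 0) (hg : g < 0) (ω : ℝ) (hω : 0 < ω) (μp μm : ℂ)
    (hroots : ∀ x : ℂ, (ρ : ℂ) * x ^ 2 - gam f g ω * x + (1 - (ρ : ℂ))
      = (ρ : ℂ) * (x - μp) * (x - μm)) :
    ‖μp‖ ≠ ‖μm‖ :=
  stmt_15_general ρ hρ f g hg ω hω μp μm hroots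
end
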